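/- arXiv:2007.15520 — 8 statements merged into one kernel-verified Lean document; each statement's English description precedes it below -/
import Mathlib

section
/- Let G be a finite cost-minimization game, let h : S → ℝ be an objective function, and let λ > 0 and μ < 1 be reals such that G is (λ, μ)-smooth with respect to h. Then for every pure Nash equilibrium s of G (i.e., c_u(s) ≤ c_u(s'_u, s_{-u}) for every player u and every s'_u ∈ S_u) and every strategy profile s*, it holds that h(s) ≤ (λ/(1−μ))·h(s*). -/
open Finset

/-- If a finite cost-minimization game is `(lam, mu)`-smooth with respect to
an objective function `h`, with `lam > 0` and `mu < 1`, then every pure Nash equilibrium `s`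
satisfies `h s ≤ (lam / (1 - mu)) * h sstar` for every profile `sstar`. -/
theorem smoothness_theorem
    {ι : Type*} [Fintype ι] [DecidableEq ι]
    (S : ι → Type*) [∀ u, Fintype (S u)] [∀ u, Nonempty (S u)]
    (c : ι → (∀ u, S u) → ℝ)
    (h : (∀ u, S u) → ℝ)
    (lam mu : ℝ) (hlam : 0 < lam) (hmu : mu < 1)
    (hsmooth : ∀ s sstar : ∀ u, S u,
      lam * h sstar ≥
        (∑ u, c u (Function.update s u (sstar u))) - (∑ u, c u s) + (1 - mu) * h s)
    (s : ∀ u, S u)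
    (hNash : ∀ (u : ι) (s'u : S u), c u s ≤ c u (Function.update s u s'u))
    (sstar : ∀ u, S u) :
    h s ≤ (lam / (1 - mu)) * h sstar := by
  have hsum : (∑ u, c u s) ≤ ∑ u, c u (Function.update s u (sstar u)) :=
    Finset.sum_le_sum fun u _ => hNash u (sstar u)
  have key : (1 - mu) * h s ≤ lam * h sstar := by
    have := hsmooth s sstar
    linarith
  have hpos : 0 < 1 - mu := by linarith
  rw [div_mul_eq_mul_div, le_div_iff₀ hpos]
  linarith [key]
end

section
/- Let G be a finite cost-minimization game that is (λ, μ)-smooth with respect to an objective function h, with λ > 0 and μ < 1, and let σ be a coarse correlated equilibrium of G. Then for every strategy profile s* ∈ S: E_{s∼σ}[h(s)] ≤ (λ/(1−μ))·h(s*), where E_{s∼σ}[·] denotes Σ_{s∈S} σ(s)·(·). -/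
open Finset

/-- **Extension theorem.** For every `(lam, mu)`-smooth finite cost-minimization
game with respect to an objective `h` (with `lam > 0`, `mu < 1`), every coarse correlated
equilibrium `σ`, and every outcome `sstar`, the expected objective value under `σ` is at most
`(lam / (1 - mu)) * h sstar`. -/
theorem extension_theorem
    {ι : Type*} [Fintype ι] [DecidableEq ι]
    (S : ι → Type*) [∀ u, Fintype (S u)] [∀ u, Nonempty (S u)]
    (c : ι → (∀ u, S u) → ℝ)
    (h : (∀ u, S u) → ℝ)
    (lam mu : ℝ) (hlam : 0 < lam) (hmu : mu < 1)
    (hsmooth : ∀ s sstar : ∀ u, S u,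
      lam * h sstar ≥
        (∑ u, c u (Function.update s u (sstar u))) - (∑ u, c u s) + (1 - mu) * h s)
    (σ : (∀ u, S u) → ℝ)
    (hσnonneg : ∀ s, 0 ≤ σ s)
    (hσsum : ∑ s : ∀ u, S u, σ s = 1)
    (hCCE : ∀ (u : ι) (s'u : S u),
      ∑ s : ∀ u, S u, σ s * c u s ≤ ∑ s : ∀ u, S u, σ s * c u (Function.update s u s'u))
    (sstar : ∀ u, S u) :
    ∑ s : ∀ u, S u, σ s * h s ≤ (lam / (1 - mu)) * h sstar := by
  have hmu' : 0 < 1 - mu := by linarith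
  have key : (1 - mu) * ∑ s : ∀ u, S u, σ s * h s ≤ lam * h sstar := by
    have step1 : ∑ s : ∀ u, S u, σ s *
        ((∑ u, c u (Function.update s u (sstar u))) - (∑ u, c u s) + (1 - mu) * h s)
        ≤ lam * h sstar := by
      calc ∑ s : ∀ u, S u, σ s *
            ((∑ u, c u (Function.update s u (sstar u))) - (∑ u, c u s) + (1 - mu) * h s)
          ≤ ∑ s : ∀ u, S u, σ s * (lam * h sstar) := by
            apply Finset.sum_le_sum
            intro s _
            exact mul_le_mul_of_nonneg_left (hsmooth s sstar) (hσnonneg s)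
        _ = lam * h sstar := by rw [← Finset.sum_mul, hσsum, one_mul]
    have expand : ∑ s : ∀ u, S u, σ s *
        ((∑ u, c u (Function.update s u (sstar u))) - (∑ u, c u s) + (1 - mu) * h s)
        = (∑ u, ((∑ s : ∀ u, S u, σ s * c u (Function.update s u (sstar u)))
              - ∑ s : ∀ u, S u, σ s * c u s))
          + (1 - mu) * ∑ s : ∀ u, S u, σ s * h s := by
      have e1 : ∑ s : ∀ u, S u, ∑ u, σ s * c u (Function.update s u (sstar u))
          = ∑ u, ∑ s : ∀ u, S u, σ s * c u (Function.update s u (sstar u)) :=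
        Finset.sum_comm
      have e2 : ∑ s : ∀ u, S u, ∑ u, σ s * c u s
          = ∑ u, ∑ s : ∀ u, S u, σ s * c u s := Finset.sum_comm
      have e3 : ∑ s : ∀ u, S u, σ s * ((1 - mu) * h s)
          = (1 - mu) * ∑ s : ∀ u, S u, σ s * h s := by
        rw [Finset.mul_sum]
        exact Finset.sum_congr rfl fun s _ => mul_left_comm _ _ _
      simp only [mul_add, mul_sub, Finset.sum_add_distrib, Finset.sum_sub_distrib,
        Finset.mul_sum, e1, e2, e3]
    have dev : ∀ u : ι, 0 ≤ (∑ s : ∀ u, S u, σ s * c u (Function.update s u (sstar u)))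
        - ∑ s : ∀ u, S u, σ s * c u s := fun u => sub_nonneg.mpr (hCCE u (sstar u))
    have hsum0 : 0 ≤ ∑ u, ((∑ s : ∀ u, S u, σ s * c u (Function.update s u (sstar u)))
        - ∑ s : ∀ u, S u, σ s * c u s) := Finset.sum_nonneg fun u _ => dev u
    rw [expand] at step1
    linarith
  rw [div_mul_eq_mul_div, le_div_iff₀ hmu', mul_comm]
  exact key
end

section
/- Let G be a congestion game with N players, let λ ∈ ℝ, let h_e : ℕ → ℝ for each resource e, and define the objective h(s) = Σ_{e∈E} h_e(n_e(s)). Let f'_e : ℕ → ℝ be nondecreasing modified cost functions such that for every resource e and all integers 0 ≤ n, m ≤ N: λ·h_e(m) ≥ m·f'_e(n+1) − n·f'_e(n) + h_e(n). Then G with the modified costs is (λ, 0)-smooth with respect to h, i.e., for every pair of strategy profiles s, s*: λ·h(s*) ≥ Σ_{u∈𝒩} c'_u(s*_u, s_{-u}) − Σ_{u∈𝒩} c'_u(s) + h(s). -/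
open Finset

/-- The number of players using resource `e` in the profile `s`. -/
def congLoad {ι E : Type*} [Fintype ι] [DecidableEq E] (s : ι → Finset E) (e : E) : ℕ :=
  (Finset.univ.filter fun u => e ∈ s u).card

/-- The cost of player `u` in profile `s` with resource cost functions `f`. -/
def congCost {ι E : Type*} [Fintype ι] [DecidableEq E] (f : E → ℕ → ℝ) (s : ι → Finset E) (u : ι) : ℝ :=
  ∑ e ∈ s u, f e (congLoad s e)

lemma double_count {ι E : Type*} [Fintype ι] [Fintype E] [DecidableEq E]
    (s : ι → Finset E) (g : E → ℝ) :
    ∑ u, ∑ e ∈ s u, g e = ∑ e, (congLoad s e : ℝ) * g e := by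
  calc ∑ u, ∑ e ∈ s u, g e
      = ∑ u : ι, ∑ e : E, if e ∈ s u then g e else 0 := by
        refine Finset.sum_congr rfl fun u _ => ?_
        rw [Finset.sum_ite_mem, Finset.univ_inter]
    _ = ∑ e : E, ∑ u : ι, if e ∈ s u then g e else 0 := Finset.sum_comm
    _ = ∑ e, (congLoad s e : ℝ) * g e := by
        refine Finset.sum_congr rfl fun e _ => ?_
        rw [← Finset.sum_filter, Finset.sum_const, nsmul_eq_mul, congLoad]

lemma congLoad_le {ι E : Type*} [Fintype ι] [DecidableEq E] (s : ι → Finset E) (e : E) :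
    congLoad s e ≤ Fintype.card ι := by
  simpa [congLoad] using Finset.card_filter_le Finset.univ (fun u => e ∈ s u)

lemma congLoad_update_le {ι E : Type*} [Fintype ι] [DecidableEq ι] [DecidableEq E]
    (s : ι → Finset E) (u : ι) (t : Finset E) (e : E) :
    congLoad (Function.update s u t) e ≤ congLoad s e + 1 := by
  have hsub : (Finset.univ.filter fun v => e ∈ Function.update s u t v) ⊆
      insert u (Finset.univ.filter fun v => e ∈ s v) := by
    intro v hv
    simp only [Finset.mem_filter, Finset.mem_univ, true_and] at hv
    by_cases hvu : v = u
    · simp [hvu]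
    · rw [Function.update_of_ne hvu] at hv
      simp [hv]
  calc congLoad (Function.update s u t) e
      ≤ (insert u (Finset.univ.filter fun v => e ∈ s v)).card := Finset.card_le_card hsub
    _ ≤ congLoad s e + 1 := by
        simpa [congLoad] using Finset.card_insert_le u _

/-- If the modified cost functions `f'` satisfy the per-resource smoothness
condition `lam * h_e(m) ≥ m * f'_e(n+1) - n * f'_e(n) + h_e(n)` for all `0 ≤ n, m ≤ N`, then
the congestion game with the modified costs is `(lam, 0)`-smooth with respect to the objective
`h(s) = ∑_e h_e(n_e(s))`. -/
theorem congestion_smoothness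
    {ι E : Type*} [Fintype ι] [DecidableEq ι] [Fintype E] [DecidableEq E]
    (Strat : ι → Finset (Finset E)) (hStrat : ∀ u, (Strat u).Nonempty)
    (f' : E → ℕ → ℝ) (hf'mono : ∀ e, Monotone (f' e))
    (lam : ℝ) (hobj : E → ℕ → ℝ)
    (hsmooth : ∀ e, ∀ n m : ℕ, n ≤ Fintype.card ι → m ≤ Fintype.card ι →
      lam * hobj e m ≥ (m : ℝ) * f' e (n + 1) - (n : ℝ) * f' e n + hobj e n)
    (s sstar : ι → Finset E)
    (hs : ∀ u, s u ∈ Strat u) (hsstar : ∀ u, sstar u ∈ Strat u) :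
    lam * (∑ e, hobj e (congLoad sstar e)) ≥
      (∑ u, congCost f' (Function.update s u (sstar u)) u) - (∑ u, congCost f' s u)
        + ∑ e, hobj e (congLoad s e) := by
  have hA : ∑ u, congCost f' (Function.update s u (sstar u)) u ≤
      ∑ e, (congLoad sstar e : ℝ) * f' e (congLoad s e + 1) := by
    rw [← double_count]
    refine Finset.sum_le_sum fun u _ => ?_
    have : congCost f' (Function.update s u (sstar u)) u =
        ∑ e ∈ sstar u, f' e (congLoad (Function.update s u (sstar u)) e) := by
      simp [congCost]
    rw [this]
    exact Finset.sum_le_sum fun e _ =>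
      hf'mono e (congLoad_update_le s u (sstar u) e)
  have hB : ∑ u, congCost f' s u = ∑ e, (congLoad s e : ℝ) * f' e (congLoad s e) := by
    simpa [congCost] using double_count s (fun e => f' e (congLoad s e))
  have hC : lam * (∑ e, hobj e (congLoad sstar e)) ≥
      ∑ e, ((congLoad sstar e : ℝ) * f' e (congLoad s e + 1)
        - (congLoad s e : ℝ) * f' e (congLoad s e) + hobj e (congLoad s e)) := by
    rw [Finset.mul_sum]
    exact Finset.sum_le_sum fun e _ =>
      hsmooth e (congLoad s e) (congLoad sstar e) (congLoad_le s e) (congLoad_le sstar e)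
  have := hC
  rw [Finset.sum_add_distrib, Finset.sum_sub_distrib] at this
  rw [hB]
  linarith
end

section
/- Let λ ∈ ℝ, N ∈ ℕ, and let f, f' : ℕ → ℝ be functions such that for all naturals n, m, z with n + z ≤ N and m + z ≤ N: λ·Σ_{i=z+1}^{m+z} f(i) − m·f'(n+z+1) + n·f'(n+z) ≥ Σ_{i=z+1}^{n+z} f(i). Then for every integer i with 1 ≤ i ≤ N: f(i) ≤ f'(i) ≤ λ·f(i). -/
open Finset

/-- If `f'` satisfies the strong `(lam, 0)`-smoothness condition with respect
to the potential of a resource with cost function `f` for up to `N` players, then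
`f i ≤ f' i ≤ lam * f i` for all `1 ≤ i ≤ N`. -/
theorem modified_cost_bounds
    (lam : ℝ) (N : ℕ) (f f' : ℕ → ℝ)
    (hsmooth : ∀ n m z : ℕ, n + z ≤ N → m + z ≤ N →
      lam * (∑ i ∈ Finset.Icc (z + 1) (m + z), f i)
          - (m : ℝ) * f' (n + z + 1) + (n : ℝ) * f' (n + z)
        ≥ ∑ i ∈ Finset.Icc (z + 1) (n + z), f i) :
    ∀ i : ℕ, 1 ≤ i → i ≤ N → f i ≤ f' i ∧ f' i ≤ lam * f i := by
  intro i h1 hN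
  obtain ⟨z, rfl⟩ : ∃ z, i = z + 1 := ⟨i - 1, by omega⟩
  have h1' := hsmooth 1 0 z (by omega) (by omega)
  have h2' := hsmooth 0 1 z (by omega) (by omega)
  simp only [Nat.zero_add, Nat.one_add, Nat.add_zero, Nat.cast_one, Nat.cast_zero,
    one_mul, zero_mul, sub_zero, add_zero, zero_add] at h1' h2'
  simp only [Nat.succ_eq_add_one] at h1' h2'
  rw [Finset.Icc_self, Finset.sum_singleton] at h1' h2'
  rw [show Finset.Icc (z + 1) z = ∅ from Finset.Icc_eq_empty (by omega)] at h1' h2'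
  simp at h1' h2'
  constructor
  · linarith
  · linarith
end

section
/- Let G be a congestion game whose cost functions f_e are nonnegative, let λ ≥ 1 and p ≥ λ be reals, and let f'_e : ℕ → ℝ be modified cost functions with f_e(i) ≤ f'_e(i) ≤ λ·f_e(i) for every resource e and every i ≥ 1. Define the Rosenthal potential with respect to the modified costs φ̃(s) = Σ_{e∈E} Σ_{i=1}^{n_e(s)} f'_e(i). Then for every player u, every profile s, and every strategy s'_u ∈ S_u: φ̃(s'_u, s_{-u}) − φ̃(s) ≤ p·c_u(s'_u, s_{-u}) − c_u(s). In particular, if c_u(s'_u, s_{-u}) < c_u(s)/p (a p-move with respect to the original costs), then φ̃(s'_u, s_{-u}) < φ̃(s); i.e., φ̃ is a p-approximate potential function with respect to the original costs. -/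
open Finset

/-- Rosenthal's potential of the profile `s` with resource cost functions `f`. -/
def congPot {ι E : Type*} [Fintype ι] [Fintype E] [DecidableEq E]
    (f : E → ℕ → ℝ) (s : ι → Finset E) : ℝ :=
  ∑ e, ∑ i ∈ Finset.Icc 1 (congLoad s e), f e i

/-- If `f_e(i) ≤ f'_e(i) ≤ lam * f_e(i)` for all `i ≥ 1` and `p ≥ lam ≥ 1`,
then Rosenthal's potential `φ̃` with respect to the modified costs `f'` is a `p`-approximate
potential with respect to the original costs: a deviation of a single player satisfies
`φ̃(s'_u, s_{-u}) - φ̃(s) ≤ p * c_u(s'_u, s_{-u}) - c_u(s)`; in particular every `p`-move with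
respect to the original costs strictly decreases `φ̃`. -/
theorem approximate_potential
    {ι E : Type*} [Fintype ι] [DecidableEq ι] [Fintype E] [DecidableEq E]
    (Strat : ι → Finset (Finset E)) (hStrat : ∀ u, (Strat u).Nonempty)
    (f f' : E → ℕ → ℝ)
    (hfnonneg : ∀ e n, 0 ≤ f e n)
    (lam p : ℝ) (hlam : 1 ≤ lam) (hp : lam ≤ p)
    (hbounds : ∀ e, ∀ i : ℕ, 1 ≤ i → f e i ≤ f' e i ∧ f' e i ≤ lam * f e i)
    (u : ι) (s : ι → Finset E) (hs : ∀ v, s v ∈ Strat v)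
    (s'u : Finset E) (hs'u : s'u ∈ Strat u) :
    congPot f' (Function.update s u s'u) - congPot f' s ≤
        p * congCost f (Function.update s u s'u) u - congCost f s u
      ∧ (congCost f (Function.update s u s'u) u < congCost f s u / p →
        congPot f' (Function.update s u s'u) < congPot f' s) := by
  classical
  set t := Function.update s u s'u with ht
  have htu : t u = s'u := Function.update_self _ _ _
  set m : E → ℕ := fun e => ((Finset.univ.erase u).filter fun v => e ∈ s v).card with hm
  have loadAux : ∀ (r : ι → Finset E) (e : E), congLoad r e =
      ((Finset.univ.erase u).filter fun v => e ∈ r v).card + (if e ∈ r u then 1 else 0) := by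
    intro r e
    unfold congLoad
    rw [← Finset.insert_erase (Finset.mem_univ u), Finset.filter_insert]
    split
    · rw [Finset.card_insert_of_notMem
        (fun h => (Finset.mem_erase.1 (Finset.mem_filter.1 h).1).1 rfl)]
      simp [*]
    · simp [*]
  have hLt : ∀ e, congLoad t e = m e + (if e ∈ s'u then 1 else 0) := by
    intro e
    rw [loadAux t e, htu, hm]
    congr 2
    apply Finset.filter_congr
    intro v hv
    rw [ht, Function.update_of_ne (Finset.mem_erase.1 hv).1]
  have hLs : ∀ e, congLoad s e = m e + (if e ∈ s u then 1 else 0) := fun e => loadAux s e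
  have h1p : 1 ≤ p := le_trans hlam hp
  have key : ∀ e, (∑ i ∈ Finset.Icc 1 (congLoad t e), f' e i)
        - (∑ i ∈ Finset.Icc 1 (congLoad s e), f' e i)
      ≤ p * (if e ∈ s'u then f e (congLoad t e) else 0)
        - (if e ∈ s u then f e (congLoad s e) else 0) := by
    intro e
    have hb := hbounds e (m e + 1) (Nat.le_add_left 1 (m e))
    have hf := hfnonneg e (m e + 1)
    by_cases h'a : e ∈ s'u <;> by_cases hb' : e ∈ s u <;>
      simp only [hLt e, hLs e, h'a, hb', if_true, if_false]
    · nlinarith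
    · rw [Finset.sum_Icc_succ_top (Nat.le_add_left 1 (m e))]
      simp only [add_zero]
      nlinarith
    · simp only [add_zero]
      rw [Finset.sum_Icc_succ_top (Nat.le_add_left 1 (m e))]
      nlinarith
    · simp
  have hsum := Finset.sum_le_sum (fun e (_ : e ∈ Finset.univ) => key e)
  have e1 : congPot f' t - congPot f' s = ∑ e, ((∑ i ∈ Finset.Icc 1 (congLoad t e), f' e i)
      - (∑ i ∈ Finset.Icc 1 (congLoad s e), f' e i)) := by
    rw [Finset.sum_sub_distrib]; rfl
  have e2 : (∑ e, (p * (if e ∈ s'u then f e (congLoad t e) else 0)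
        - (if e ∈ s u then f e (congLoad s e) else 0)))
      = p * congCost f t u - congCost f s u := by
    rw [Finset.sum_sub_distrib, ← Finset.mul_sum]
    congr 1
    · congr 1
      rw [congCost, htu]
      simp [Finset.sum_ite_mem]
    · rw [congCost]
      simp [Finset.sum_ite_mem]
  have main : congPot f' t - congPot f' s ≤ p * congCost f t u - congCost f s u := by
    rw [e1, ← e2]; exact hsum
  refine ⟨main, fun hmove => ?_⟩
  have hp0 : 0 < p := lt_of_lt_of_le zero_lt_one h1p
  have : p * congCost f t u < congCost f s u := by
    rw [mul_comm]
    exact (lt_div_iff₀ hp0).1 hmove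
  linarith
end

section
/- Let d ≥ 1 be an integer, λ ≥ 1 a real, and f' : ℕ → ℝ a nonnegative function. Suppose that for all naturals n, z, and all naturals m with m ≤ (d+1)·(n+z+1)^2, the inequality λ·Σ_{i=z+1}^{m+z} i^d − m·f'(n+z+1) + n·f'(n+z) ≥ Σ_{i=z+1}^{n+z} i^d holds. Then the same inequality holds for all naturals n, z and all naturals m (in particular for all m > (d+1)·(n+z+1)^2). -/
open Finset

/-- If the per-resource strong smoothness condition for the cost function
`f(x) = x^d` holds for all `m ≤ (d+1) * (n+z+1)^2`, then it holds for all `m`. -/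
theorem smoothness_bounded_m_potential
    (d : ℕ) (hd : 1 ≤ d) (lam : ℝ) (hlam : 1 ≤ lam)
    (f' : ℕ → ℝ) (hf'nonneg : ∀ n, 0 ≤ f' n)
    (hsmooth : ∀ n z m : ℕ, m ≤ (d + 1) * (n + z + 1) ^ 2 →
      lam * (∑ i ∈ Finset.Icc (z + 1) (m + z), (i : ℝ) ^ d)
          - (m : ℝ) * f' (n + z + 1) + (n : ℝ) * f' (n + z)
        ≥ ∑ i ∈ Finset.Icc (z + 1) (n + z), (i : ℝ) ^ d) :
    ∀ n z m : ℕ,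
      lam * (∑ i ∈ Finset.Icc (z + 1) (m + z), (i : ℝ) ^ d)
          - (m : ℝ) * f' (n + z + 1) + (n : ℝ) * f' (n + z)
        ≥ ∑ i ∈ Finset.Icc (z + 1) (n + z), (i : ℝ) ^ d := by
  -- First, f'(z+1) ≤ lam * (z+1)^d for all z, from hsmooth with n=0, m=1.
  have hbound : ∀ z : ℕ, f' (z + 1) ≤ lam * ((z + 1 : ℕ) : ℝ) ^ d := by
    intro z
    have h := hsmooth 0 z 1 (Nat.one_le_iff_ne_zero.mpr (by positivity))
    simp only [Nat.zero_add, Nat.cast_zero, zero_mul, Nat.cast_one, one_mul] at h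
    have hIcc : Finset.Icc (z + 1) (1 + z) = {z + 1} := by
      rw [Nat.add_comm 1 z]; exact Finset.Icc_self _
    rw [hIcc] at h
    have hempty : Finset.Icc (z + 1) z = ∅ := by
      apply Finset.Icc_eq_empty; omega
    rw [hempty] at h
    simp at h
    push_cast
    linarith
  intro n z m
  set M := (d + 1) * (n + z + 1) ^ 2 with hM
  by_cases hm : m ≤ M
  · exact hsmooth n z m hm
  · push_neg at hm
    have key : ∀ k, M ≤ k →
        lam * (∑ i ∈ Finset.Icc (z + 1) (k + z), (i : ℝ) ^ d)
          - (k : ℝ) * f' (n + z + 1) + (n : ℝ) * f' (n + z)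
        ≥ ∑ i ∈ Finset.Icc (z + 1) (n + z), (i : ℝ) ^ d := by
      intro k hk
      induction k, hk using Nat.le_induction with
      | base => exact hsmooth n z M le_rfl
      | succ k hk ih =>
        rw [show k + 1 + z = (k + z) + 1 by omega,
          Finset.sum_Icc_succ_top (by omega) (fun i : ℕ => (i : ℝ) ^ d)]
        -- increment: lam * (k+z+1)^d - f'(n+z+1) ≥ 0
        have hle : (n + z + 1 : ℕ) ≤ k + z + 1 := by
          have h1 : n + z + 1 ≤ (n + z + 1) ^ 2 := Nat.le_self_pow (by norm_num) _
          have h2 : (n + z + 1) ^ 2 ≤ (d + 1) * (n + z + 1) ^ 2 :=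
            Nat.le_mul_of_pos_left _ (by omega)
          omega
        have hmono : ((n + z + 1 : ℕ) : ℝ) ^ d ≤ ((k + z + 1 : ℕ) : ℝ) ^ d := by
          apply pow_le_pow_left₀ (by positivity)
          exact_mod_cast hle
        have hfb := hbound (n + z)
        have hinc : f' (n + z + 1) ≤ lam * ((k + z + 1 : ℕ) : ℝ) ^ d := by
          calc f' (n + z + 1) ≤ lam * ((n + z + 1 : ℕ) : ℝ) ^ d := hfb
            _ ≤ lam * ((k + z + 1 : ℕ) : ℝ) ^ d := by
                apply mul_le_mul_of_nonneg_left hmono (by linarith)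
        push_cast
        push_cast at ih hinc
        nlinarith [ih, hinc]
    exact key m (le_of_lt hm)
end

section
/- Let d ≥ 1 be an integer, let λ > 0 be a real, and set ν = ((d+1)·λ)^{1/(d+1)}. Then for every natural n with n^{d+1}·(ν − 1) ≥ (d/(d+1))·(n+1)^{d+1} and every natural m, it holds that λ·m^{d+1} − m·ν·(n+1)^d + n·ν·n^d ≥ n^{d+1}. (In the paper this is stated as: for d ≤ 5 and n ≥ 1154, the function f'(n) = ν·n^d with ν = ((d+1)·λ_d)^{1/(d+1)} is (λ_d, 0)-smooth with respect to h(n) = n^{d+1} for the appropriate constant λ_d = Ψ_d; the displayed condition on n is exactly the one established in its proof.) -/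
open Real

theorem young_inequality_pow_succ (d : ℕ) {a b : ℝ} (ha : 0 ≤ a) (hb : 0 ≤ b) :
    a * b ^ d ≤ a ^ (d + 1) / (d + 1) + d * b ^ (d + 1) / (d + 1) := by
  rcases Nat.eq_zero_or_pos d with rfl | hd
  · simp
  have hd' : (0 : ℝ) < d := by exact_mod_cast hd
  have hpq : ((d : ℝ) + 1).HolderConjugate (((d : ℝ) + 1) / d) := by
    rw [Real.holderConjugate_iff_eq_conjExponent (by linarith)]
    congr 1
    ring
  have hY := Real.young_inequality_of_nonneg ha (pow_nonneg hb d) hpq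
  have ha' : a ^ ((d : ℝ) + 1) = a ^ (d + 1) := by exact_mod_cast rpow_natCast a (d + 1)
  have hb' : (b ^ d) ^ (((d : ℝ) + 1) / d) = b ^ (d + 1) := by
    rw [← rpow_natCast b d, ← rpow_mul hb, mul_div_cancel₀ _ hd'.ne']
    exact_mod_cast rpow_natCast b (d + 1)
  rwa [ha', hb', div_div_eq_mul_div, mul_comm _ (d : ℝ)] at hY

theorem smoothness_large_load_social_cost_general
    (d : ℕ) (lam : ℝ) (hlam : 0 < lam)
    (ν : ℝ) (hν : ν = (((d : ℝ) + 1) * lam) ^ ((1 : ℝ) / ((d : ℝ) + 1)))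
    (n : ℕ)
    (hn : (n : ℝ) ^ (d + 1) * (ν - 1) ≥
      ((d : ℝ) / ((d : ℝ) + 1)) * ((n : ℝ) + 1) ^ (d + 1)) :
    ∀ m : ℕ,
      lam * (m : ℝ) ^ (d + 1) - (m : ℝ) * ν * ((n : ℝ) + 1) ^ d + (n : ℝ) * ν * (n : ℝ) ^ d
        ≥ (n : ℝ) ^ (d + 1) := by
  intro m
  have hν_pow : ν ^ (d + 1) = (d + 1) * lam := by
    have h := rpow_inv_natCast_pow (x := ((d : ℝ) + 1) * lam) (by positivity) d.succ_ne_zero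
    rwa [Nat.cast_succ, inv_eq_one_div, ← hν] at h
  have hν_nonneg : 0 ≤ ν := hν ▸ by positivity
  -- `ν` is chosen so that Young's inequality for `ν m` and `n + 1` has first term `lam m^(d+1)`.
  have hY :=
    young_inequality_pow_succ d (mul_nonneg hν_nonneg m.cast_nonneg) n.cast_add_one_pos.le
  rw [mul_pow, hν_pow, mul_assoc ((d : ℝ) + 1),
    mul_div_cancel_left₀ _ (by positivity : ((d : ℝ) + 1) ≠ 0)] at hY
  linear_combination hY + hn

/-- For `d ≥ 1`, `lam > 0` and `ν = ((d+1) * lam)^(1/(d+1))`, the taxed cost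
function `f'(n) = ν * n^d` satisfies the per-resource `(lam, 0)`-smoothness condition with
respect to the social cost objective `h(n) = n^(d+1)` of the resource cost `f(n) = n^d`, for
all loads `n` large enough that `n^(d+1) * (ν - 1) ≥ (d/(d+1)) * (n+1)^(d+1)`. -/
theorem smoothness_large_load_social_cost
    (d : ℕ) (hd : 1 ≤ d) (lam : ℝ) (hlam : 0 < lam)
    (ν : ℝ) (hν : ν = (((d : ℝ) + 1) * lam) ^ ((1 : ℝ) / ((d : ℝ) + 1)))
    (n : ℕ)
    (hn : (n : ℝ) ^ (d + 1) * (ν - 1) ≥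
      ((d : ℝ) / ((d : ℝ) + 1)) * ((n : ℝ) + 1) ^ (d + 1)) :
    ∀ m : ℕ,
      lam * (m : ℝ) ^ (d + 1) - (m : ℝ) * ν * ((n : ℝ) + 1) ^ d + (n : ℝ) * ν * (n : ℝ) ^ d
        ≥ (n : ℝ) ^ (d + 1) :=
  smoothness_large_load_social_cost_general d lam hlam ν hν n hn
end

section
/- Let d ≥ 1 be an integer, λ ≥ 1 a real, and f' : ℕ → ℝ a nonnegative function. Suppose that for every natural n and every natural m with m ≤ (n+1)^2, the inequality λ·m^{d+1} − m·f'(n+1) + n·f'(n) ≥ n^{d+1} holds. Then the same inequality holds for every natural n and every natural m (in particular for all m > (n+1)^2). -/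
/-! The hypothesis at `m = n + 1` says `(n+1) f'(n+1) ≤ λ (n+1)^(d+1) + n f'(n)`; telescoping gives
`f'(n+1) ≤ λ (n+1)^(d+1)`, and the hypothesis at `m = 0` gives `n f'(n) ≥ n^(d+1)`. Hence for every
`m` the left-hand side is at least `λ m (m^d - (n+1)^(d+1)) + n^(d+1)`, and `m^d ≥ (n+1)^(d+1)`
as soon as `m ≥ (n+1)^2`. -/

lemma pow_succ_le_pow_of_sq_le {a x : ℝ} (ha : 1 ≤ a) (hx : a ^ 2 ≤ x) {d : ℕ} (hd : 1 ≤ d) :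
    a ^ (d + 1) ≤ x ^ d :=
  calc a ^ (d + 1) ≤ a ^ (2 * d) := pow_le_pow_right₀ ha (by omega)
    _ = (a ^ 2) ^ d := pow_mul a 2 d
    _ ≤ x ^ d := pow_le_pow_left₀ (by positivity) hx d

lemma le_mul_pow_of_succ_mul_le {a : ℕ → ℝ} {c : ℝ} {k : ℕ} (hc : 0 ≤ c)
    (hstep : ∀ n : ℕ, (n + 1 : ℝ) * a (n + 1) ≤ c * (n + 1 : ℝ) ^ k + n * a n) (n : ℕ) :
    a (n + 1) ≤ c * (n + 1 : ℝ) ^ k := by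
  have hsum : ∀ n : ℕ, (n : ℝ) * a n ≤ c * (n : ℝ) ^ (k + 1) := by
    intro n
    induction n with
    | zero => simp
    | succ n ih =>
      have hpow : (n : ℝ) ^ (k + 1) ≤ n * (n + 1 : ℝ) ^ k := by
        rw [pow_succ']
        gcongr
        linarith
      push_cast
      calc (n + 1 : ℝ) * a (n + 1) ≤ c * (n + 1 : ℝ) ^ k + c * (n * (n + 1 : ℝ) ^ k) := by
            linarith [hstep n, mul_le_mul_of_nonneg_left hpow hc]
        _ = c * (n + 1 : ℝ) ^ (k + 1) := by ring
  have hpos : (0 : ℝ) < n + 1 := by positivity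
  rw [← mul_le_mul_iff_right₀ hpos]
  calc (n + 1 : ℝ) * a (n + 1) ≤ c * (n + 1 : ℝ) ^ (k + 1) := by exact_mod_cast hsum (n + 1)
    _ = (n + 1) * (c * (n + 1 : ℝ) ^ k) := by ring

theorem smoothness_bounded_m_social_cost_general
    (d : ℕ) (hd : 1 ≤ d) (lam : ℝ) (hlam : 1 ≤ lam)
    (f' : ℕ → ℝ)
    (hsmooth : ∀ n m : ℕ, m ≤ (n + 1) ^ 2 →
      lam * (m : ℝ) ^ (d + 1) - (m : ℝ) * f' (n + 1) + (n : ℝ) * f' n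
        ≥ (n : ℝ) ^ (d + 1)) :
    ∀ n m : ℕ,
      lam * (m : ℝ) ^ (d + 1) - (m : ℝ) * f' (n + 1) + (n : ℝ) * f' n
        ≥ (n : ℝ) ^ (d + 1) := by
  intro n m
  rcases le_or_gt m ((n + 1) ^ 2) with hm | hm
  · exact hsmooth n m hm
  have hlam₀ : 0 ≤ lam := by linarith
  have hf'_le : f' (n + 1) ≤ lam * (n + 1 : ℝ) ^ (d + 1) := by
    refine le_mul_pow_of_succ_mul_le hlam₀ (fun k => ?_) n
    have h := hsmooth k (k + 1) (Nat.le_self_pow two_ne_zero _)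
    push_cast at h
    linarith [pow_nonneg (k.cast_nonneg : (0 : ℝ) ≤ k) (d + 1)]
  have hn_le : (n : ℝ) ^ (d + 1) ≤ n * f' n := by simpa using hsmooth n 0 (Nat.zero_le _)
  have hm_pow : (n + 1 : ℝ) ^ (d + 1) ≤ (m : ℝ) ^ d :=
    pow_succ_le_pow_of_sq_le (by linarith [n.cast_nonneg (α := ℝ)]) (by exact_mod_cast hm.le) hd
  have hm_tax : (m : ℝ) * f' (n + 1) ≤ lam * (m : ℝ) ^ (d + 1) :=
    calc (m : ℝ) * f' (n + 1) ≤ m * (lam * (n + 1 : ℝ) ^ (d + 1)) := by gcongr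
      _ ≤ m * (lam * (m : ℝ) ^ d) := by gcongr
      _ = lam * (m : ℝ) ^ (d + 1) := by ring
  linarith

/-- If the per-resource `(lam, 0)`-smoothness condition with respect to the
social cost objective `h(n) = n^(d+1)` holds for all `m ≤ (n+1)^2`, then it holds for all `m`. -/
theorem smoothness_bounded_m_social_cost
    (d : ℕ) (hd : 1 ≤ d) (lam : ℝ) (hlam : 1 ≤ lam)
    (f' : ℕ → ℝ) (hf'nonneg : ∀ n, 0 ≤ f' n)
    (hsmooth : ∀ n m : ℕ, m ≤ (n + 1) ^ 2 →
      lam * (m : ℝ) ^ (d + 1) - (m : ℝ) * f' (n + 1) + (n : ℝ) * f' n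
        ≥ (n : ℝ) ^ (d + 1)) :
    ∀ n m : ℕ,
      lam * (m : ℝ) ^ (d + 1) - (m : ℝ) * f' (n + 1) + (n : ℝ) * f' n
        ≥ (n : ℝ) ^ (d + 1) :=
  smoothness_bounded_m_social_cost_general d hd lam hlam f' hsmooth
end
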